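/- Reduction of the coupled system (3.34a) to a single equation: let a, b and c₁,…,c_N be complex scalars, and let U₁,…,U_N : ℝ → (k×k complex matrices) be twice differentiable functions satisfying, for each n, Ü_n = 2a U̇_n + b U_n + 2[U̇_n, F] + [U_n, Ḟ] − 2a[U_n, F] − [[U_n, F], F], where F(t) := Σ_{m=1}^{N} c_m U_m(t). Then the matrix F satisfies the single uncoupled ODE F̈ = 2a Ḟ + b F + [Ḟ, F]. -/

import Mathlib

/-!
For fixed `F` and `Ḟ` the right-hand side of the equation for `Ü_n` is linear in `(U_n, U̇_n)`.
Summing the equations with weights `c_n` therefore gives `F̈` as the same expression evaluated at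
`(F, Ḟ)`, where `[F, F] = 0` and `[F, Ḟ] = -[Ḟ, F]` collapse it to `2a Ḟ + b F + [Ḟ, F]`.
-/

open Matrix

attribute [local instance] Matrix.normedAddCommGroup Matrix.normedSpace

noncomputable section

attribute [local instance] LieRing.ofAssociativeRing

section coupledRHS

variable {R A : Type*} [CommRing R] [Ring A] [Algebra R A]

/-- The right-hand side of (3.34a) for `Ü_n`, with `F = X` and `Ḟ = X'` held fixed and
`(U_n, U̇_n)` as the argument. -/
def coupledRHS (a b : R) (X X' : A) : A × A →ₗ[R] A where
  toFun p := (2 * a) • p.2 + b • p.1 + (2 : R) • ⁅p.2, X⁆ + ⁅p.1, X'⁆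
    - (2 * a) • ⁅p.1, X⁆ - ⁅⁅p.1, X⁆, X⁆
  map_add' p q := by
    simp only [Prod.fst_add, Prod.snd_add, smul_add, add_lie]
    abel
  map_smul' r p := by
    simp only [Prod.smul_fst, Prod.smul_snd, smul_lie, RingHom.id_apply, smul_add, smul_sub,
      smul_comm r]

theorem coupledRHS_apply (a b : R) (X X' u u' : A) :
    coupledRHS a b X X' (u, u') =
      (2 * a) • u' + b • u + (2 : R) • (u' * X - X * u') + (u * X' - X' * u)
        - (2 * a) • (u * X - X * u) - ((u * X - X * u) * X - X * (u * X - X * u)) := by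
  simp only [coupledRHS, LinearMap.coe_mk, AddHom.coe_mk, Ring.lie_def]

theorem coupledRHS_self (a b : R) (X X' : A) :
    coupledRHS a b X X' (X, X') = (2 * a) • X' + b • X + ⁅X', X⁆ := by
  simp only [coupledRHS, LinearMap.coe_mk, AddHom.coe_mk, lie_self, zero_lie, smul_zero, sub_zero,
    ← lie_skew X X']
  module

end coupledRHS

theorem hasDerivAt_sum_smul {𝕜 R E ι : Type*} [NontriviallyNormedField 𝕜] [NormedAddCommGroup E]
    [NormedSpace 𝕜 E] [Semiring R] [Module R E] [SMulCommClass 𝕜 R E] [ContinuousConstSMul R E]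
    [Fintype ι] (c : ι → R) {u : ι → 𝕜 → E} {u' : ι → E} {t : 𝕜}
    (hu : ∀ i, HasDerivAt (u i) (u' i) t) :
    HasDerivAt (fun s ↦ ∑ i, c i • u i s) (∑ i, c i • u' i) t :=
  HasDerivAt.fun_sum fun i _ ↦ (hu i).const_smul (c i)

theorem coupled_system_reduces_to_single (k N : ℕ) (a b : ℂ) (c : Fin N → ℂ)
    (U U' U'' : Fin N → ℝ → Matrix (Fin k) (Fin k) ℂ)
    (hU : ∀ n t, HasDerivAt (U n) (U' n t) t)
    (hU' : ∀ n t, HasDerivAt (U' n) (U'' n t) t)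
    (F F' : ℝ → Matrix (Fin k) (Fin k) ℂ)
    (hF : ∀ t, F t = ∑ m, c m • U m t)
    (hF' : ∀ t, F' t = ∑ m, c m • U' m t)
    (hODE : ∀ n t, U'' n t =
      (2 * a) • U' n t + b • U n t
        + (2 : ℂ) • (U' n t * F t - F t * U' n t)
        + (U n t * F' t - F' t * U n t)
        - (2 * a) • (U n t * F t - F t * U n t)
        - ((U n t * F t - F t * U n t) * F t - F t * (U n t * F t - F t * U n t))) :
    (∀ t, HasDerivAt F (F' t) t) ∧
    ∀ t, HasDerivAt F' ((2 * a) • F' t + b • F t + (F' t * F t - F t * F' t)) t := by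
  refine ⟨fun t ↦ ?_, fun t ↦ ?_⟩
  · rw [funext hF, hF']
    exact hasDerivAt_sum_smul c fun n ↦ hU n t
  · have hsum : ∑ n, c n • (U n t, U' n t) = (F t, F' t) := by
      ext <;> simp [Prod.fst_sum, Prod.snd_sum, hF, hF']
    have hF'' : ∑ n, c n • U'' n t = (2 * a) • F' t + b • F t + ⁅F' t, F t⁆ := by
      simp only [hODE, ← coupledRHS_apply, ← map_smul, ← map_sum, hsum, coupledRHS_self]
    rw [← Ring.lie_def, ← hF'', funext hF']
    exact hasDerivAt_sum_smul c fun n ↦ hU' n t
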